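/- arXiv:1602.08887 — 2 statements merged into one kernel-verified Lean document; each statement's English description precedes it below -/
import Mathlib

section
/- Let $\nu$ be a Lévy measure on $\mathbb R^d$ (i.e. $\nu(\{0\})=0$ and $\int (1 \wedge |y|^2)\,\nu(dy) < \infty$) satisfying $c(\nu) := \nu(\{y : |y| > 1\}) < \infty$ and $\int_{\{|y|>1\}} |y|^2 e^{2\beta|y|}\, \nu(dy) < \infty$ for some $\beta \ge 0$. Set $\rho(x) = e^{-\beta|x|}$ and define for $\varphi \in C^2_c(\mathbb R^d)$ the operator $\tilde L^2_I \varphi(x) = \int_{\{|y|>1\}} (\varphi(x+y) - \varphi(x))\,\nu(dy)$. Then $\int_{\mathbb R^d} |\tilde L^2_I \varphi(x)|^2 \rho^2(x)\, dx \le c(\nu) \Big(\int_{\{|y|>1\}} |y|^2 e^{2\beta|y|}\,\nu(dy)\Big) \int_{\mathbb R^d} |\nabla \varphi(x)|^2 \rho^2(x)\, dx$. -/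
/-!
Write `φ (x + y) - φ x = ∫₀¹ Dφ (x + t y) y dt`. Since `β ≥ 0` the weight is moderate,
`ρ x ≤ ρ (x + t y) e^{β|y|}` for `t ∈ [0, 1]`, so Cauchy–Schwarz on `[0, 1]` gives
`|φ (x + y) - φ x|² ρ(x)² ≤ |y|² e^{2β|y|} ∫₀¹ |Dφ (x + t y)|² ρ(x + t y)² dt`.
Cauchy–Schwarz in `y` against the finite measure `ν` restricted to `{|y| > 1}` costs the factor
`c(ν)`; after integrating in `x` (Tonelli), translation invariance of Lebesgue measure removes
the shift `t y`. The estimates are carried out for lower Lebesgue integrals, with any weights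
`ρ, κ` such that `ρ x ≤ ρ (x + t y) κ y`, so that no integrability has to be checked on the way.
-/

open MeasureTheory Set
open scoped ENNReal

theorem lintegral_sq_le_measure_univ_mul_lintegral_sq {α : Type*} [MeasurableSpace α]
    (μ : Measure α) {f : α → ℝ≥0∞} (hf : AEMeasurable f μ) :
    (∫⁻ a, f a ∂μ) ^ 2 ≤ μ univ * ∫⁻ a, f a ^ 2 ∂μ := by
  have hpq : Real.HolderConjugate 2 2 := by constructor <;> norm_num
  have h := ENNReal.lintegral_mul_le_Lp_mul_Lq μ hpq hf aemeasurable_const (g := fun _ => 1)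
  simp only [Pi.mul_apply, mul_one, ENNReal.rpow_two, one_pow, lintegral_const, one_mul] at h
  calc (∫⁻ a, f a ∂μ) ^ 2 ≤ ((∫⁻ a, f a ^ 2 ∂μ) ^ (1/2:ℝ) * μ univ ^ (1/2:ℝ)) ^ 2 := by gcongr
    _ = μ univ * ∫⁻ a, f a ^ 2 ∂μ := by
        rw [mul_pow, ← ENNReal.rpow_natCast, ← ENNReal.rpow_natCast (_ ^ (1/2:ℝ)),
          ← ENNReal.rpow_mul, ← ENNReal.rpow_mul]
        norm_num [mul_comm]

theorem enorm_mul_ofReal_sq {F : Type*} [SeminormedAddGroup F] (a : F) {r : ℝ}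
    (hr : 0 ≤ r) : (‖a‖ₑ * ENNReal.ofReal r) ^ 2 = ENNReal.ofReal (‖a‖ ^ 2 * r ^ 2) := by
  rw [← ofReal_norm, ← ENNReal.ofReal_mul (norm_nonneg _), ← ENNReal.ofReal_pow (by positivity),
    mul_pow]

theorem ofReal_exp_neg_mul_norm_le_mul {E : Type*} [SeminormedAddCommGroup E]
    [NormedSpace ℝ E] {β : ℝ} (hβ : 0 ≤ β) (x y : E) (t : ℝ) (ht : t ∈ Icc (0:ℝ) 1) :
    ENNReal.ofReal (Real.exp (-β * ‖x‖))
      ≤ ENNReal.ofReal (Real.exp (-β * ‖x + t • y‖)) * ENNReal.ofReal (Real.exp (β * ‖y‖)) := by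
  have hty : ‖t • y‖ ≤ ‖y‖ := by
    rw [norm_smul, Real.norm_of_nonneg ht.1]
    exact mul_le_of_le_one_left (norm_nonneg y) ht.2
  rw [← ENNReal.ofReal_mul (Real.exp_pos _).le, ← Real.exp_add]
  refine ENNReal.ofReal_le_ofReal (Real.exp_le_exp.2 ?_)
  nlinarith [norm_add_le x (t • y)]

theorem lintegral_enorm_mul_ofReal_sq {α F : Type*} [MeasurableSpace α] {μ : Measure α}
    [SeminormedAddGroup F] {f : α → F} {g : α → ℝ} (hg : ∀ a, 0 ≤ g a)
    (hint : Integrable (fun a => ‖f a‖ ^ 2 * g a ^ 2) μ) :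
    ∫⁻ a, (‖f a‖ₑ * ENNReal.ofReal (g a)) ^ 2 ∂μ
      = ENNReal.ofReal (∫ a, ‖f a‖ ^ 2 * g a ^ 2 ∂μ) := by
  rw [ofReal_integral_eq_lintegral_ofReal hint (ae_of_all _ fun a => by positivity)]
  exact lintegral_congr fun a => enorm_mul_ofReal_sq _ (hg a)

section

variable {E F : Type*} [NormedAddCommGroup E] [NormedSpace ℝ E]
  [NormedAddCommGroup F] [NormedSpace ℝ F] [CompleteSpace F]

theorem enorm_sub_le_lintegral_fderiv_segment {φ : E → F} (hφ : ContDiff ℝ 1 φ) (x y : E) :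
    ‖φ (x + y) - φ x‖ₑ ≤ ∫⁻ t in Ioc (0:ℝ) 1, ‖fderiv ℝ φ (x + t • y)‖ₑ * ‖y‖ₑ := by
  have hderiv (t : ℝ) :
      HasDerivAt (fun s : ℝ => φ (x + s • y)) (fderiv ℝ φ (x + t • y) y) t := by
    have hline : HasDerivAt (fun s : ℝ => x + s • y) y t := by
      simpa using ((hasDerivAt_id t).smul_const y).const_add x
    exact (hφ.differentiable one_ne_zero _).hasFDerivAt.comp_hasDerivAt t hline
  have hcont : Continuous fun t : ℝ => fderiv ℝ φ (x + t • y) y := by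
    have := hφ.continuous_fderiv one_ne_zero
    fun_prop
  have hftc : ∫ t in (0:ℝ)..1, fderiv ℝ φ (x + t • y) y = φ (x + y) - φ x := by
    simpa using intervalIntegral.integral_eq_sub_of_hasDerivAt (fun t _ => hderiv t)
      (hcont.intervalIntegrable 0 1)
  rw [← hftc, intervalIntegral.integral_of_le zero_le_one]
  exact (enorm_integral_le_lintegral_enorm _).trans
    (lintegral_mono fun t => (fderiv ℝ φ _).le_opENorm y)

variable [MeasurableSpace E] [BorelSpace E]

theorem enorm_sub_mul_sq_le_lintegral_segment {φ : E → F} (hφ : ContDiff ℝ 1 φ)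
    {ρ κ : E → ℝ≥0∞} (hρ : Measurable ρ)
    (hρκ : ∀ x y : E, ∀ t ∈ Icc (0:ℝ) 1, ρ x ≤ ρ (x + t • y) * κ y) (x y : E) :
    (‖φ (x + y) - φ x‖ₑ * ρ x) ^ 2
      ≤ (‖y‖ₑ * κ y) ^ 2
        * ∫⁻ t in Ioc (0:ℝ) 1, (‖fderiv ℝ φ (x + t • y)‖ₑ * ρ (x + t • y)) ^ 2 := by
  set G : ℝ → ℝ≥0∞ := fun t => ‖fderiv ℝ φ (x + t • y)‖ₑ * ρ (x + t • y)
  have hG : Measurable G := by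
    have := hφ.continuous_fderiv one_ne_zero
    have hline : Continuous fun t : ℝ => x + t • y := by fun_prop
    exact ((this.comp hline).enorm.measurable).mul (hρ.comp hline.measurable)
  have hfirst : ‖φ (x + y) - φ x‖ₑ * ρ x ≤ (∫⁻ t in Ioc (0:ℝ) 1, G t) * (‖y‖ₑ * κ y) :=
    calc ‖φ (x + y) - φ x‖ₑ * ρ x
        ≤ (∫⁻ t in Ioc (0:ℝ) 1, ‖fderiv ℝ φ (x + t • y)‖ₑ * ‖y‖ₑ) * ρ x := by
          gcongr; exact enorm_sub_le_lintegral_fderiv_segment hφ x y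
      _ ≤ ∫⁻ t in Ioc (0:ℝ) 1, ‖fderiv ℝ φ (x + t • y)‖ₑ * ‖y‖ₑ * ρ x :=
          lintegral_mul_const_le _ _
      _ ≤ ∫⁻ t in Ioc (0:ℝ) 1, G t * (‖y‖ₑ * κ y) := by
          refine setLIntegral_mono' measurableSet_Ioc fun t ht => ?_
          calc ‖fderiv ℝ φ (x + t • y)‖ₑ * ‖y‖ₑ * ρ x
              ≤ ‖fderiv ℝ φ (x + t • y)‖ₑ * ‖y‖ₑ * (ρ (x + t • y) * κ y) := by
                gcongr; exact hρκ x y t (Ioc_subset_Icc_self ht)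
            _ = G t * (‖y‖ₑ * κ y) := by ring
      _ = (∫⁻ t in Ioc (0:ℝ) 1, G t) * (‖y‖ₑ * κ y) := lintegral_mul_const _ hG
  have hCS := lintegral_sq_le_measure_univ_mul_lintegral_sq (volume.restrict (Ioc (0:ℝ) 1))
    hG.aemeasurable
  rw [Measure.restrict_apply_univ, Real.volume_Ioc, sub_zero, ENNReal.ofReal_one, one_mul] at hCS
  calc (‖φ (x + y) - φ x‖ₑ * ρ x) ^ 2
      ≤ ((∫⁻ t in Ioc (0:ℝ) 1, G t) * (‖y‖ₑ * κ y)) ^ 2 := by gcongr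
    _ ≤ (‖y‖ₑ * κ y) ^ 2 * ∫⁻ t in Ioc (0:ℝ) 1, G t ^ 2 := by
        rw [mul_pow, mul_comm]; gcongr

theorem lintegral_lintegral_Ioc_comp_add_smul (μ : Measure E) [SFinite μ]
    [μ.IsAddRightInvariant] {G : E → ℝ≥0∞} (hG : Measurable G) (y : E) :
    ∫⁻ x, (∫⁻ t in Ioc (0:ℝ) 1, G (x + t • y)) ∂μ = ∫⁻ x, G x ∂μ := by
  have hmeas : Measurable fun p : E × ℝ => G (p.1 + p.2 • y) :=
    hG.comp (by fun_prop : Continuous fun p : E × ℝ => p.1 + p.2 • y).measurable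
  rw [lintegral_lintegral_swap hmeas.aemeasurable]
  simp_rw [lintegral_add_right_eq_self G]
  simp [Real.volume_Ioc]

theorem lintegral_sq_lintegral_enorm_sub_mul_le [SecondCountableTopology E] (μ : Measure E)
    [SFinite μ] [μ.IsAddRightInvariant] (ν : Measure E) [SFinite ν] {φ : E → F}
    (hφ : ContDiff ℝ 1 φ)
    {ρ κ : E → ℝ≥0∞} (hρ : Measurable ρ) (hκ : Measurable κ)
    (hρκ : ∀ x y : E, ∀ t ∈ Icc (0:ℝ) 1, ρ x ≤ ρ (x + t • y) * κ y) :
    ∫⁻ x, ((∫⁻ y, ‖φ (x + y) - φ x‖ₑ ∂ν) * ρ x) ^ 2 ∂μ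
      ≤ ν univ * (∫⁻ y, (‖y‖ₑ * κ y) ^ 2 ∂ν) * ∫⁻ x, (‖fderiv ℝ φ x‖ₑ * ρ x) ^ 2 ∂μ := by
  set G : E → ℝ≥0∞ := fun z => (‖fderiv ℝ φ z‖ₑ * ρ z) ^ 2
  set K : E → ℝ≥0∞ := fun y => (‖y‖ₑ * κ y) ^ 2
  set T : E × E → ℝ≥0∞ := fun p => ∫⁻ t in Ioc (0:ℝ) 1, G (p.1 + t • p.2)
  have hG : Measurable G :=
    (((hφ.continuous_fderiv one_ne_zero).enorm.measurable).mul hρ).pow_const 2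
  have hK : Measurable K := (continuous_enorm.measurable.mul hκ).pow_const 2
  have hT : Measurable T := Measurable.lintegral_prod_right' <|
    hG.comp (by fun_prop : Continuous fun q : (E × E) × ℝ => q.1.1 + q.2 • q.1.2).measurable
  have hKT : Measurable fun p : E × E => K p.2 * T p := (hK.comp measurable_snd).mul hT
  have hpointwise (x : E) :
      ((∫⁻ y, ‖φ (x + y) - φ x‖ₑ ∂ν) * ρ x) ^ 2 ≤ ν univ * ∫⁻ y, K y * T (x, y) ∂ν := by
    have hjump_meas : Measurable fun y => ‖φ (x + y) - φ x‖ₑ := by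
      have := hφ.continuous
      exact (by fun_prop : Continuous fun y => ‖φ (x + y) - φ x‖ₑ).measurable
    calc ((∫⁻ y, ‖φ (x + y) - φ x‖ₑ ∂ν) * ρ x) ^ 2
        = (∫⁻ y, ‖φ (x + y) - φ x‖ₑ ∂ν) ^ 2 * ρ x ^ 2 := mul_pow _ _ _
      _ ≤ ν univ * (∫⁻ y, ‖φ (x + y) - φ x‖ₑ ^ 2 ∂ν) * ρ x ^ 2 := by
          gcongr; exact lintegral_sq_le_measure_univ_mul_lintegral_sq ν hjump_meas.aemeasurable
      _ = ν univ * ∫⁻ y, (‖φ (x + y) - φ x‖ₑ * ρ x) ^ 2 ∂ν := by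
          rw [mul_assoc, ← lintegral_mul_const _ (hjump_meas.pow_const 2)]
          simp_rw [mul_pow]
      _ ≤ ν univ * ∫⁻ y, K y * T (x, y) ∂ν := by
          gcongr with y
          exact enorm_sub_mul_sq_le_lintegral_segment hφ hρ hρκ x y
  calc ∫⁻ x, ((∫⁻ y, ‖φ (x + y) - φ x‖ₑ ∂ν) * ρ x) ^ 2 ∂μ
      ≤ ∫⁻ x, ν univ * ∫⁻ y, K y * T (x, y) ∂ν ∂μ := lintegral_mono hpointwise
    _ = ν univ * ∫⁻ y, ∫⁻ x, K y * T (x, y) ∂μ ∂ν := by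
        rw [lintegral_const_mul _ hKT.lintegral_prod_right',
          lintegral_lintegral_swap hKT.aemeasurable]
    _ = ν univ * ∫⁻ y, K y * ∫⁻ x, G x ∂μ ∂ν := by
        congr 1
        refine lintegral_congr fun y => ?_
        rw [lintegral_const_mul (K y) (f := fun x => T (x, y)) (hT.comp measurable_prodMk_right),
          ← lintegral_lintegral_Ioc_comp_add_smul μ hG y]
    _ = ν univ * (∫⁻ y, K y ∂ν) * ∫⁻ x, G x ∂μ := by
        rw [lintegral_mul_const _ hK, mul_assoc]

theorem integral_sq_norm_integral_sub_mul_exp_le [SecondCountableTopology E] (μ : Measure E)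
    [SFinite μ] [μ.IsAddRightInvariant] (ν : Measure E) [IsFiniteMeasure ν] {β : ℝ} (hβ : 0 ≤ β)
    {φ : E → F} (hφ : ContDiff ℝ 1 φ)
    (hgrad : Integrable (fun x => ‖fderiv ℝ φ x‖ ^ 2 * Real.exp (-β * ‖x‖) ^ 2) μ)
    (hmom : Integrable (fun y => ‖y‖ ^ 2 * Real.exp (2 * β * ‖y‖)) ν) :
    ∫ x, ‖∫ y, (φ (x + y) - φ x) ∂ν‖ ^ 2 * Real.exp (-β * ‖x‖) ^ 2 ∂μ
      ≤ (ν univ).toReal * (∫ y, ‖y‖ ^ 2 * Real.exp (2 * β * ‖y‖) ∂ν)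
          * ∫ x, ‖fderiv ℝ φ x‖ ^ 2 * Real.exp (-β * ‖x‖) ^ 2 ∂μ := by
  have hexp (y : E) : Real.exp (β * ‖y‖) ^ 2 = Real.exp (2 * β * ‖y‖) := by
    rw [← Real.exp_nat_mul]; ring_nf
  have hbound := lintegral_sq_lintegral_enorm_sub_mul_le μ ν hφ
    (ρ := fun x => ENNReal.ofReal (Real.exp (-β * ‖x‖)))
    (κ := fun y => ENNReal.ofReal (Real.exp (β * ‖y‖))) (by fun_prop) (by fun_prop)
    (ofReal_exp_neg_mul_norm_le_mul hβ)
  rw [lintegral_enorm_mul_ofReal_sq (fun _ => (Real.exp_pos _).le) hgrad,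
    lintegral_enorm_mul_ofReal_sq (fun _ => (Real.exp_pos _).le) (by simpa only [hexp] using hmom)]
    at hbound
  simp only [hexp] at hbound
  have hjump (x : E) :
      ENNReal.ofReal ‖‖∫ y, (φ (x + y) - φ x) ∂ν‖ ^ 2 * Real.exp (-β * ‖x‖) ^ 2‖
        ≤ ((∫⁻ y, ‖φ (x + y) - φ x‖ₑ ∂ν) * ENNReal.ofReal (Real.exp (-β * ‖x‖))) ^ 2 := by
    rw [Real.norm_of_nonneg (by positivity), ← enorm_mul_ofReal_sq _ (Real.exp_pos _).le]
    gcongr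
    exact enorm_integral_le_lintegral_enorm _
  calc ∫ x, ‖∫ y, (φ (x + y) - φ x) ∂ν‖ ^ 2 * Real.exp (-β * ‖x‖) ^ 2 ∂μ
      ≤ ‖∫ x, ‖∫ y, (φ (x + y) - φ x) ∂ν‖ ^ 2 * Real.exp (-β * ‖x‖) ^ 2 ∂μ‖ := Real.le_norm_self _
    _ ≤ (∫⁻ x, ENNReal.ofReal ‖‖∫ y, (φ (x + y) - φ x) ∂ν‖ ^ 2
          * Real.exp (-β * ‖x‖) ^ 2‖ ∂μ).toReal := norm_integral_le_lintegral_norm _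
    _ ≤ (ν univ * ENNReal.ofReal (∫ y, ‖y‖ ^ 2 * Real.exp (2 * β * ‖y‖) ∂ν)
          * ENNReal.ofReal (∫ x, ‖fderiv ℝ φ x‖ ^ 2 * Real.exp (-β * ‖x‖) ^ 2 ∂μ)).toReal :=
        ENNReal.toReal_mono (by finiteness) ((lintegral_mono hjump).trans hbound)
    _ = _ := by
        rw [ENNReal.toReal_mul, ENNReal.toReal_mul,
          ENNReal.toReal_ofReal (integral_nonneg fun y => by positivity),
          ENNReal.toReal_ofReal (integral_nonneg fun x => by positivity)]

end

theorem large_jumps_operator_bound_general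
    {d : ℕ} (ν : Measure (EuclideanSpace ℝ (Fin d)))
    (β : ℝ) (hβ : 0 ≤ β)
    (hc : ν {y | 1 < ‖y‖} < ⊤)
    (hmom : ∫⁻ y in {y | 1 < ‖y‖}, ENNReal.ofReal (‖y‖ ^ 2 * Real.exp (2 * β * ‖y‖)) ∂ν < ⊤)
    (ρ : EuclideanSpace ℝ (Fin d) → ℝ) (hρ : ∀ x, ρ x = Real.exp (-β * ‖x‖))
    (φ : EuclideanSpace ℝ (Fin d) → ℝ) (hφ : ContDiff ℝ 2 φ) (hsupp : HasCompactSupport φ)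
    (L2I : EuclideanSpace ℝ (Fin d) → ℝ)
    (hL2I : ∀ x, L2I x = ∫ y in {y | 1 < ‖y‖}, (φ (x + y) - φ x) ∂ν) :
    ∫ x, |L2I x| ^ 2 * ρ x ^ 2
      ≤ (ν {y | 1 < ‖y‖}).toReal
          * (∫ y in {y | 1 < ‖y‖}, ‖y‖ ^ 2 * Real.exp (2 * β * ‖y‖) ∂ν)
          * ∫ x, ‖fderiv ℝ φ x‖ ^ 2 * ρ x ^ 2 := by
  obtain rfl : ρ = fun x => Real.exp (-β * ‖x‖) := funext hρ
  have : IsFiniteMeasure (ν.restrict {y | 1 < ‖y‖}) := ⟨by rwa [Measure.restrict_apply_univ]⟩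
  have hgrad : Integrable (fun x => ‖fderiv ℝ φ x‖ ^ 2 * Real.exp (-β * ‖x‖) ^ 2) := by
    have := hφ.continuous_fderiv two_ne_zero
    exact (by fun_prop : Continuous _).integrable_of_hasCompactSupport (μ := volume) <|
      ((hsupp.fderiv (𝕜 := ℝ)).comp_left (g := fun v => ‖v‖ ^ 2) (by simp)).mul_right
  have hmom_int : Integrable (fun y => ‖y‖ ^ 2 * Real.exp (2 * β * ‖y‖))
      (ν.restrict {y | 1 < ‖y‖}) :=
    (lintegral_ofReal_ne_top_iff_integrable (by fun_prop : Continuous _).aestronglyMeasurable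
      (ae_of_all _ fun y => by positivity)).1 hmom.ne
  have hbound := integral_sq_norm_integral_sub_mul_exp_le volume (ν.restrict {y | 1 < ‖y‖}) hβ
    (hφ.of_le one_le_two) hgrad hmom_int
  rw [Measure.restrict_apply_univ] at hbound
  simpa only [hL2I, Real.norm_eq_abs] using hbound

/-- Weighted `L²` bound for the "large jumps" part of the integro-differential operator:
`‖L̃²_I φ‖²_{L²_ρ} ≤ c(ν) (∫_{|y|>1} |y|² e^{2β|y|} ν(dy)) ‖∇φ‖²_{L²_ρ}`. -/
theorem large_jumps_operator_bound
    {d : ℕ} (ν : Measure (EuclideanSpace ℝ (Fin d)))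
    (hν0 : ν {0} = 0)
    (hνlevy : ∫⁻ y, ENNReal.ofReal (min 1 (‖y‖ ^ 2)) ∂ν < ⊤)
    (β : ℝ) (hβ : 0 ≤ β)
    (hc : ν {y | 1 < ‖y‖} < ⊤)
    (hmom : ∫⁻ y in {y | 1 < ‖y‖}, ENNReal.ofReal (‖y‖ ^ 2 * Real.exp (2 * β * ‖y‖)) ∂ν < ⊤)
    (ρ : EuclideanSpace ℝ (Fin d) → ℝ) (hρ : ∀ x, ρ x = Real.exp (-β * ‖x‖))
    (φ : EuclideanSpace ℝ (Fin d) → ℝ) (hφ : ContDiff ℝ 2 φ) (hsupp : HasCompactSupport φ)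
    (L2I : EuclideanSpace ℝ (Fin d) → ℝ)
    (hL2I : ∀ x, L2I x = ∫ y in {y | 1 < ‖y‖}, (φ (x + y) - φ x) ∂ν) :
    ∫ x, |L2I x| ^ 2 * ρ x ^ 2
      ≤ (ν {y | 1 < ‖y‖}).toReal
          * (∫ y in {y | 1 < ‖y‖}, ‖y‖ ^ 2 * Real.exp (2 * β * ‖y‖) ∂ν)
          * ∫ x, ‖fderiv ℝ φ x‖ ^ 2 * ρ x ^ 2 :=
  large_jumps_operator_bound_general ν β hβ hc hmom ρ hρ φ hφ hsupp L2I hL2I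
end

section
/- Let $\nu$ be a Lévy measure on $\mathbb R^d$ with $\int_{\{|y|>1\}} |y| e^{\beta|y|}\,\nu(dy) < \infty$ for some $\beta \ge 0$, and let $\rho(x) = e^{-\beta|x|}$. For $\varphi, \phi \in C^2_c(\mathbb R^d)$ define $I_1 = \int_{\mathbb R^d}\Big(\int_{\{|y|>1\}} (\varphi(x+y) - \varphi(x))\,\nu(dy)\Big)\phi(x)\rho^2(x)\,dx$. Then $|I_1| \le \sqrt d\, \Big(\int_{\{|y|>1\}} |y| e^{\beta|y|}\,\nu(dy)\Big) \|\nabla\varphi\|_{L^2_\rho}\, \|\phi\|_{L^2_\rho}$, where $\|f\|_{L^2_\rho}^2 = \int |f|^2 \rho^2\,dx$. -/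
/-!
Write `φ (x + y) - φ x = ∫₀¹ Dφ (x + t y) y dt`. For `0 ≤ t ≤ 1` the weight satisfies
`ρ x ≤ e^{β|y|} ρ (x + t y)`, so one factor `ρ x` of `ρ x ^ 2` can be moved onto the translated
derivative; Cauchy–Schwarz in `x` and translation invariance of Lebesgue measure then bound the
`x`-integral by `|y| e^{β|y|} ‖Dφ‖_{L²_ρ} ‖ϕ‖_{L²_ρ}`, and Tonelli integrates this over `ν`.
Working in `ℝ≥0∞` makes every exchange of integrals unconditional. The estimate holds with the
operator norm of `Dφ` and constant `1`; the factor `√d` is `≥ 1` unless `d = 0`, where everything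
vanishes.
-/

open MeasureTheory Set ENNReal

theorem enorm_sub_le_lintegral_enorm_fderiv {E F : Type*} [NormedAddCommGroup E]
    [NormedSpace ℝ E] [NormedAddCommGroup F] [NormedSpace ℝ F] [CompleteSpace F] {f : E → F}
    (hf : ContDiff ℝ 1 f) (x y : E) :
    ‖f (x + y) - f x‖ₑ ≤ ∫⁻ t in Ioc (0 : ℝ) 1, ‖fderiv ℝ f (x + t • y)‖ₑ * ‖y‖ₑ := by
  have hline : ∀ t : ℝ, HasDerivAt (fun u : ℝ => x + u • y) y t := fun t => by
    simpa using ((hasDerivAt_id t).smul_const y).const_add x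
  have hftc : f (x + y) - f x = ∫ t in (0 : ℝ)..1, fderiv ℝ f (x + t • y) y := by
    rw [intervalIntegral.integral_eq_sub_of_hasDerivAt
      (fun t _ => ((hf.differentiable one_ne_zero).differentiableAt.hasFDerivAt).comp_hasDerivAt t
        (hline t))]
    · simp
    · exact ((hf.continuous_fderiv one_ne_zero).comp (by fun_prop)).clm_apply continuous_const
        |>.intervalIntegrable 0 1
  rw [hftc, intervalIntegral.integral_of_le zero_le_one]
  exact (enorm_integral_le_lintegral_enorm _).trans
    (lintegral_mono fun t => (fderiv ℝ f (x + t • y)).le_opENorm y)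

theorem lintegral_enorm_comp_add_right_mul_le {α : Type*} [MeasurableSpace α] [Add α]
    [MeasurableAdd α] (μ : Measure α) [μ.IsAddRightInvariant] {f g : α → ℝ}
    (hf : AEStronglyMeasurable f μ) (hg : AEStronglyMeasurable g μ) (v : α) :
    ∫⁻ x, ‖f (x + v)‖ₑ * ‖g x‖ₑ ∂μ ≤ eLpNorm f 2 μ * eLpNorm g 2 μ := by
  have hv := measurePreserving_add_right μ v
  have hfv : AEStronglyMeasurable (fun x => f (x + v)) μ :=
    hf.comp_measurePreserving hv
  have holder := eLpNorm_le_eLpNorm_mul_eLpNorm'_of_norm (p := 2) (q := 2) (r := 1) hfv hg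
    (· * ·) 1 (ae_of_all _ fun x => by simp)
  simp only [eLpNorm_one_eq_lintegral_enorm, enorm_mul, coe_one, one_mul] at holder
  rwa [← Function.comp_def f, eLpNorm_comp_measurePreserving hf hv] at holder

theorem MeasureTheory.MemLp.eLpNorm_two_eq_ofReal_sqrt {α : Type*} [MeasurableSpace α]
    {μ : Measure α} {f : α → ℝ} (hf : MemLp f 2 μ) :
    eLpNorm f 2 μ = ENNReal.ofReal √(∫ x, f x ^ 2 ∂μ) := by
  rw [hf.eLpNorm_eq_integral_rpow_norm two_ne_zero ofNat_ne_top, Real.sqrt_eq_rpow]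
  simp

theorem isFiniteMeasure_restrict_of_one_le {α : Type*} [MeasurableSpace α] {ν : Measure α}
    {s : Set α} {f : α → ℝ≥0∞} (hf : Measurable f) (h1 : ∀ y ∈ s, 1 ≤ f y)
    (hfin : ∫⁻ y in s, f y ∂ν < ∞) : IsFiniteMeasure (ν.restrict s) :=
  ⟨by simpa using (setLIntegral_mono hf h1).trans_lt hfin⟩

section ExpWeight

variable {E : Type*} [NormedAddCommGroup E]

noncomputable def expWeight (β : ℝ) (x : E) : ℝ := Real.exp (-β * ‖x‖)

theorem continuous_expWeight (β : ℝ) : Continuous (expWeight (E := E) β) := by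
  unfold expWeight; fun_prop

theorem expWeight_pos (β : ℝ) (x : E) : 0 < expWeight β x := Real.exp_pos _

theorem expWeight_le_mul_expWeight_add {β r : ℝ} (hβ : 0 ≤ β) (x : E) {v : E} (hv : ‖v‖ ≤ r) :
    expWeight β x ≤ Real.exp (β * r) * expWeight β (x + v) := by
  rw [expWeight, expWeight, ← Real.exp_add, Real.exp_le_exp]
  nlinarith [norm_add_le x v]

theorem lintegral_enorm_comp_add_right_mul_expWeight_sq_le [MeasurableSpace E] [BorelSpace E]
    (μ : Measure E) [μ.IsAddRightInvariant] {β r : ℝ} (hβ : 0 ≤ β) {f g : E → ℝ}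
    (hf : Continuous f) (hg : Continuous g) {v : E} (hv : ‖v‖ ≤ r) :
    ∫⁻ x, ‖f (x + v)‖ₑ * ‖g x * expWeight β x ^ 2‖ₑ ∂μ ≤
      ENNReal.ofReal (Real.exp (β * r)) * (eLpNorm (fun x => f x * expWeight β x) 2 μ *
        eLpNorm (fun x => g x * expWeight β x) 2 μ) := by
  have hρ := continuous_expWeight (E := E) β
  calc ∫⁻ x, ‖f (x + v)‖ₑ * ‖g x * expWeight β x ^ 2‖ₑ ∂μ
      ≤ ∫⁻ x, ENNReal.ofReal (Real.exp (β * r)) *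
          (‖f (x + v) * expWeight β (x + v)‖ₑ * ‖g x * expWeight β x‖ₑ) ∂μ := by
        refine lintegral_mono fun x => ?_
        have hw : ‖expWeight β x‖ₑ ≤
            ENNReal.ofReal (Real.exp (β * r)) * ‖expWeight β (x + v)‖ₑ := by
          rw [Real.enorm_of_nonneg (expWeight_pos β x).le,
            Real.enorm_of_nonneg (expWeight_pos β _).le, ← ofReal_mul (Real.exp_pos _).le]
          exact ofReal_le_ofReal (expWeight_le_mul_expWeight_add hβ x hv)
        calc ‖f (x + v)‖ₑ * ‖g x * expWeight β x ^ 2‖ₑ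
            = ‖f (x + v)‖ₑ * ‖g x * expWeight β x‖ₑ * ‖expWeight β x‖ₑ := by
              simp only [enorm_mul, enorm_pow]; ring
          _ ≤ ‖f (x + v)‖ₑ * ‖g x * expWeight β x‖ₑ *
              (ENNReal.ofReal (Real.exp (β * r)) * ‖expWeight β (x + v)‖ₑ) := by gcongr
          _ = _ := by simp only [enorm_mul]; ring
    _ ≤ _ := by
        rw [lintegral_const_mul' _ _ ofReal_ne_top]
        gcongr
        exact lintegral_enorm_comp_add_right_mul_le μ (hf.mul hρ).aestronglyMeasurable
          (hg.mul hρ).aestronglyMeasurable v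

theorem lintegral_enorm_sub_mul_expWeight_sq_le [NormedSpace ℝ E] [MeasurableSpace E]
    [BorelSpace E] (μ : Measure E) [μ.IsAddRightInvariant] [SFinite μ] {β : ℝ} (hβ : 0 ≤ β)
    {φ ϕ : E → ℝ} (hφ : ContDiff ℝ 1 φ) (hϕ : Continuous ϕ) (y : E) :
    ∫⁻ x, ‖φ (x + y) - φ x‖ₑ * ‖ϕ x * expWeight β x ^ 2‖ₑ ∂μ ≤
      ‖y‖ₑ * ENNReal.ofReal (Real.exp (β * ‖y‖)) *
        (eLpNorm (fun x => ‖fderiv ℝ φ x‖ * expWeight β x) 2 μ *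
          eLpNorm (fun x => ϕ x * expWeight β x) 2 μ) := by
  have hDφ : Continuous (fderiv ℝ φ) := hφ.continuous_fderiv one_ne_zero
  have hρ := continuous_expWeight (E := E) β
  calc ∫⁻ x, ‖φ (x + y) - φ x‖ₑ * ‖ϕ x * expWeight β x ^ 2‖ₑ ∂μ
      ≤ ∫⁻ x, (∫⁻ t in Ioc (0 : ℝ) 1,
          ‖y‖ₑ * (‖fderiv ℝ φ (x + t • y)‖ₑ * ‖ϕ x * expWeight β x ^ 2‖ₑ)) ∂μ := by
        refine lintegral_mono fun x => ?_
        simp_rw [mul_left_comm ‖y‖ₑ, ← mul_assoc]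
        rw [lintegral_mul_const' _ _ enorm_ne_top]
        gcongr
        simpa only [mul_comm ‖y‖ₑ] using enorm_sub_le_lintegral_enorm_fderiv hφ x y
    _ = ∫⁻ t in Ioc (0 : ℝ) 1, ∫⁻ x,
          ‖y‖ₑ * (‖fderiv ℝ φ (x + t • y)‖ₑ * ‖ϕ x * expWeight β x ^ 2‖ₑ) ∂μ :=
        lintegral_lintegral_swap (by fun_prop)
    _ ≤ ∫⁻ t in Ioc (0 : ℝ) 1, ‖y‖ₑ * ENNReal.ofReal (Real.exp (β * ‖y‖)) *
          (eLpNorm (fun x => ‖fderiv ℝ φ x‖ * expWeight β x) 2 μ *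
            eLpNorm (fun x => ϕ x * expWeight β x) 2 μ) := by
        refine setLIntegral_mono measurable_const fun t ht => ?_
        have htv : ‖t • y‖ ≤ ‖y‖ := by
          rw [norm_smul, Real.norm_of_nonneg ht.1.le]
          exact mul_le_of_le_one_left (norm_nonneg y) ht.2
        rw [lintegral_const_mul' _ _ enorm_ne_top, mul_assoc]
        gcongr
        simpa only [enorm_norm] using lintegral_enorm_comp_add_right_mul_expWeight_sq_le μ hβ
          hDφ.norm hϕ htv
    _ = _ := by simp [Real.volume_Ioc]

theorem abs_integral_integral_sub_mul_expWeight_sq_le [NormedSpace ℝ E] [MeasurableSpace E]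
    [BorelSpace E] [SecondCountableTopology E] (μ : Measure E) [μ.IsAddRightInvariant]
    [SFinite μ] (ν : Measure E) [SFinite ν] {β : ℝ} (hβ : 0 ≤ β)
    (hmom : Integrable (fun y => ‖y‖ * Real.exp (β * ‖y‖)) ν) {φ ϕ : E → ℝ}
    (hφ : ContDiff ℝ 1 φ) (hDφ : MemLp (fun x => ‖fderiv ℝ φ x‖ * expWeight β x) 2 μ)
    (hϕ : Continuous ϕ) (hϕ2 : MemLp (fun x => ϕ x * expWeight β x) 2 μ) :
    |∫ x, (∫ y, (φ (x + y) - φ x) ∂ν) * ϕ x * expWeight β x ^ 2 ∂μ| ≤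
      (∫ y, ‖y‖ * Real.exp (β * ‖y‖) ∂ν) *
        √(∫ x, (‖fderiv ℝ φ x‖ * expWeight β x) ^ 2 ∂μ) *
        √(∫ x, (ϕ x * expWeight β x) ^ 2 ∂μ) := by
  have hφc := hφ.continuous
  have hρ := continuous_expWeight (E := E) β
  have key : ‖∫ x, (∫ y, (φ (x + y) - φ x) ∂ν) * ϕ x * expWeight β x ^ 2 ∂μ‖ₑ ≤
      ENNReal.ofReal (∫ y, ‖y‖ * Real.exp (β * ‖y‖) ∂ν) *
        (eLpNorm (fun x => ‖fderiv ℝ φ x‖ * expWeight β x) 2 μ *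
          eLpNorm (fun x => ϕ x * expWeight β x) 2 μ) := calc
    _ ≤ ∫⁻ x, ‖(∫ y, (φ (x + y) - φ x) ∂ν) * ϕ x * expWeight β x ^ 2‖ₑ ∂μ :=
        enorm_integral_le_lintegral_enorm _
    _ ≤ ∫⁻ x, ∫⁻ y, ‖φ (x + y) - φ x‖ₑ * ‖ϕ x * expWeight β x ^ 2‖ₑ ∂ν ∂μ := by
        refine lintegral_mono fun x => ?_
        rw [lintegral_mul_const' _ _ enorm_ne_top, mul_assoc, enorm_mul]
        gcongr
        exact enorm_integral_le_lintegral_enorm _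
    _ = ∫⁻ y, ∫⁻ x, ‖φ (x + y) - φ x‖ₑ * ‖ϕ x * expWeight β x ^ 2‖ₑ ∂μ ∂ν :=
        lintegral_lintegral_swap (by fun_prop)
    _ ≤ ∫⁻ y, ENNReal.ofReal (‖y‖ * Real.exp (β * ‖y‖)) *
          (eLpNorm (fun x => ‖fderiv ℝ φ x‖ * expWeight β x) 2 μ *
            eLpNorm (fun x => ϕ x * expWeight β x) 2 μ) ∂ν := by
        refine lintegral_mono fun y => ?_
        rw [ENNReal.ofReal_mul (norm_nonneg y), ofReal_norm]
        exact lintegral_enorm_sub_mul_expWeight_sq_le μ hβ hφ hϕ y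
    _ = _ := by
        rw [lintegral_mul_const' _ _ (mul_ne_top hDφ.eLpNorm_ne_top hϕ2.eLpNorm_ne_top),
          ofReal_integral_eq_lintegral_ofReal hmom (ae_of_all _ fun y => by positivity)]
  rw [hDφ.eLpNorm_two_eq_ofReal_sqrt, hϕ2.eLpNorm_two_eq_ofReal_sqrt,
    ← ENNReal.ofReal_mul (Real.sqrt_nonneg _), ← ENNReal.ofReal_mul
      (integral_nonneg fun y => by positivity), Real.enorm_eq_ofReal_abs,
    ENNReal.ofReal_le_ofReal_iff (by positivity)] at key
  simpa only [mul_assoc] using key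

end ExpWeight

theorem large_jump_bilinear_bound_general
    {d : ℕ} (ν : Measure (EuclideanSpace ℝ (Fin d)))
    (β : ℝ) (hβ : 0 ≤ β)
    (hmom : ∫⁻ y in {y | 1 < ‖y‖}, ENNReal.ofReal (‖y‖ * Real.exp (β * ‖y‖)) ∂ν < ⊤)
    (ρ : EuclideanSpace ℝ (Fin d) → ℝ) (hρ : ∀ x, ρ x = Real.exp (-β * ‖x‖))
    (φ ϕ : EuclideanSpace ℝ (Fin d) → ℝ)
    (hφ : ContDiff ℝ 2 φ) (hφsupp : HasCompactSupport φ)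
    (hϕ : ContDiff ℝ 2 ϕ) (hϕsupp : HasCompactSupport ϕ)
    (I₁ : ℝ)
    (hI₁ : I₁ = ∫ x, (∫ y in {y | 1 < ‖y‖}, (φ (x + y) - φ x) ∂ν) * ϕ x * ρ x ^ 2) :
    |I₁| ≤ Real.sqrt d * (∫ y in {y | 1 < ‖y‖}, ‖y‖ * Real.exp (β * ‖y‖) ∂ν)
        * Real.sqrt (∫ x, ‖fderiv ℝ φ x‖ ^ 2 * ρ x ^ 2)
        * Real.sqrt (∫ x, ϕ x ^ 2 * ρ x ^ 2) := by
  obtain rfl : ρ = expWeight β := funext hρ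
  subst hI₁
  have hmom_ge_one : ∀ y ∈ {y : EuclideanSpace ℝ (Fin d) | 1 < ‖y‖},
      1 ≤ ENNReal.ofReal (‖y‖ * Real.exp (β * ‖y‖)) := fun y hy => by
    rw [← ofReal_one]
    exact ofReal_le_ofReal (one_le_mul_of_one_le_of_one_le hy.le
      (Real.one_le_exp (by positivity)))
  have := isFiniteMeasure_restrict_of_one_le (by fun_prop) hmom_ge_one hmom
  have hbound := abs_integral_integral_sub_mul_expWeight_sq_le volume _ hβ
    ⟨by fun_prop, (hasFiniteIntegral_iff_ofReal (ae_of_all _ fun y => by positivity)).2 hmom⟩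
    (hφ.of_le (by norm_num))
    (((hφ.continuous_fderiv two_ne_zero).norm.mul
      (continuous_expWeight β)).memLp_of_hasCompactSupport
        (hφsupp.fderiv (𝕜 := ℝ)).norm.mul_right)
    hϕ.continuous
    ((hϕ.continuous.mul (continuous_expWeight β)).memLp_of_hasCompactSupport hϕsupp.mul_right)
  simp only [mul_pow] at hbound
  rcases Nat.eq_zero_or_pos d with rfl | hd
  · simp [Subsingleton.elim _ (0 : EuclideanSpace ℝ (Fin 0))]
  · simp only [mul_assoc] at hbound ⊢
    exact hbound.trans (le_mul_of_one_le_left (by positivity) (Real.one_le_sqrt.2 (mod_cast hd)))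

/-- Bound for the large-jump bilinear term:
`|I₁| ≤ √d (∫_{|y|>1} |y| e^{β|y|} ν(dy)) ‖∇φ‖_{L²_ρ} ‖ϕ‖_{L²_ρ}`. -/
theorem large_jump_bilinear_bound
    {d : ℕ} (ν : Measure (EuclideanSpace ℝ (Fin d)))
    (hν0 : ν {0} = 0)
    (hνlevy : ∫⁻ y, ENNReal.ofReal (min 1 (‖y‖ ^ 2)) ∂ν < ⊤)
    (β : ℝ) (hβ : 0 ≤ β)
    (hmom : ∫⁻ y in {y | 1 < ‖y‖}, ENNReal.ofReal (‖y‖ * Real.exp (β * ‖y‖)) ∂ν < ⊤)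
    (ρ : EuclideanSpace ℝ (Fin d) → ℝ) (hρ : ∀ x, ρ x = Real.exp (-β * ‖x‖))
    (φ ϕ : EuclideanSpace ℝ (Fin d) → ℝ)
    (hφ : ContDiff ℝ 2 φ) (hφsupp : HasCompactSupport φ)
    (hϕ : ContDiff ℝ 2 ϕ) (hϕsupp : HasCompactSupport ϕ)
    (I₁ : ℝ)
    (hI₁ : I₁ = ∫ x, (∫ y in {y | 1 < ‖y‖}, (φ (x + y) - φ x) ∂ν) * ϕ x * ρ x ^ 2) :
    |I₁| ≤ Real.sqrt d * (∫ y in {y | 1 < ‖y‖}, ‖y‖ * Real.exp (β * ‖y‖) ∂ν)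
        * Real.sqrt (∫ x, ‖fderiv ℝ φ x‖ ^ 2 * ρ x ^ 2)
        * Real.sqrt (∫ x, ϕ x ^ 2 * ρ x ^ 2) :=
  large_jump_bilinear_bound_general ν β hβ hmom ρ hρ φ ϕ hφ hφsupp hϕ hϕsupp I₁ hI₁
end
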